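/- Let p ≥ 1, let k_j > 0 be a real number, let Γ be a symmetric positive definite real p×p matrix, and let B be a symmetric real p×p matrix. Define Y* := k_j · Γ^{1/2} (I − Γ^{−1/2} B Γ^{−1/2})₊ Γ^{1/2}. Then Y* ⪰ O, B + Y*/k_j ≻ O, the matrix G := −Γ^{−1} + (B + Y*/k_j)^{−1} satisfies G ⪯ O, and trace(G · Y*) = 0. -/

import Mathlib

/-- The positive part `X₊` of a symmetric (Hermitian) real matrix `X`: with spectral
decomposition `X = U diag(λ₁,…,λ_p) Uᵀ`, it is `U diag(max(λ₁,0),…,max(λ_p,0)) Uᵀ`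
(junk value `0` if `X` is not Hermitian). -/
noncomputable def matPosPart {p : ℕ} (X : Matrix (Fin p) (Fin p) ℝ) :
    Matrix (Fin p) (Fin p) ℝ :=
  if hX : X.IsHermitian then
    (hX.eigenvectorUnitary : Matrix (Fin p) (Fin p) ℝ) *
      Matrix.diagonal (fun i => max (hX.eigenvalues i) 0) *
      (star hX.eigenvectorUnitary : Matrix (Fin p) (Fin p) ℝ)
  else 0

/-- The square root of a positive semidefinite matrix, as `Matrix.PosSemidef.sqrt` was defined
in Mathlib of December 2024 (removed since). -/
noncomputable def Matrix.PosSemidef.sqrt {n 𝕜 : Type*} [Fintype n] [DecidableEq n] [RCLike 𝕜]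
    [PartialOrder 𝕜] [StarOrderedRing 𝕜]
    {A : Matrix n n 𝕜} (hA : A.PosSemidef) : Matrix n n 𝕜 :=
  hA.1.eigenvectorUnitary.1 * Matrix.diagonal ((↑) ∘ (√·) ∘ hA.1.eigenvalues) *
    (star hA.1.eigenvectorUnitary : Matrix n n 𝕜)


/-!
Write `S = Γ^{1/2}` and `A = 1 - S⁻¹ B S⁻¹`, so that `B = S (1 - A) S` and `Y*/kⱼ = S A⁺ S`.
Splitting `A = A⁺ - A⁻` gives `B + Y*/kⱼ = S (1 + A⁻) S` with `A⁻ ⪰ 0`, which is positive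
definite, and `G = S⁻¹ ((1 + A⁻)⁻¹ - 1) S⁻¹`. The functional calculus of `A⁻` gives
`(1 + A⁻)⁻¹ ⪯ 1`, hence `G ⪯ 0`; and `(1 + A⁻)⁻¹ - 1 = -(1 + A⁻)⁻¹ A⁻` is killed by `A⁺`
because `A⁻ A⁺ = 0`, hence `G Y* = 0`.
-/

open Matrix
open scoped MatrixOrder

lemma matPosPart_eq_posPart {p : ℕ} {X : Matrix (Fin p) (Fin p) ℝ} (hX : X.IsHermitian) :
    matPosPart X = X⁺ := by
  rw [matPosPart, dif_pos hX, CFC.posPart_def, cfcₙ_eq_cfc, hX.cfc_eq, IsHermitian.cfc,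
    Unitary.conjStarAlgAut_apply]
  rfl

section

variable {n R : Type*} [Fintype n] [CommRing R]

lemma Matrix.PosSemidef.mul_mul_self_of_isHermitian [PartialOrder R] [StarRing R]
    {M S : Matrix n n R} (hM : M.PosSemidef) (hS : S.IsHermitian) : (S * M * S).PosSemidef := by
  simpa only [hS.eq] using hM.conjTranspose_mul_mul_same S

variable [DecidableEq n]

lemma Matrix.PosDef.mul_mul_self_of_isHermitian [PartialOrder R] [StarRing R]
    {M S : Matrix n n R} (hM : M.PosDef) (hS : S.IsHermitian) (hSu : IsUnit S) :
    (S * M * S).PosDef := by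
  simpa only [hS.eq] using hM.conjTranspose_mul_mul_same (mulVec_injective_of_isUnit hSu)

lemma Matrix.conj_nonsing_inv_conj {S : Matrix n n R} (hS : IsUnit S.det)
    (M : Matrix n n R) : S * (S⁻¹ * M * S⁻¹) * S = M := by
  rw [← Matrix.mul_assoc, ← Matrix.mul_assoc, mul_nonsing_inv _ hS, Matrix.one_mul,
    Matrix.mul_assoc, nonsing_inv_mul _ hS, Matrix.mul_one]

lemma Matrix.nonsing_inv_conj_mul_conj {S : Matrix n n R} (hS : IsUnit S.det)
    (M N : Matrix n n R) : S⁻¹ * M * S⁻¹ * (S * N * S) = S⁻¹ * (M * N) * S := by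
  simp only [Matrix.mul_assoc]
  rw [← Matrix.mul_assoc S⁻¹ S, nonsing_inv_mul _ hS, Matrix.one_mul]

lemma Matrix.inv_conj_sub_inv_mul_self (S C : Matrix n n R) :
    (S * C * S)⁻¹ - (S * S)⁻¹ = S⁻¹ * (C⁻¹ - 1) * S⁻¹ := by
  rw [Matrix.mul_inv_rev, Matrix.mul_inv_rev, Matrix.mul_inv_rev, Matrix.mul_sub, Matrix.sub_mul,
    Matrix.mul_one, Matrix.mul_assoc]

lemma Matrix.inv_one_add_sub_one_mul_eq_zero {N P : Matrix n n R} (hN : IsUnit (1 + N).det)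
    (hNP : N * P = 0) : ((1 + N)⁻¹ - 1) * P = 0 := by
  have hinv : (1 + N)⁻¹ - 1 = -((1 + N)⁻¹ * N) := by
    have h := nonsing_inv_mul (1 + N) hN
    rw [Matrix.mul_add, Matrix.mul_one] at h
    rw [eq_neg_iff_add_eq_zero, sub_add_eq_add_sub, h, sub_self]
  rw [hinv, Matrix.neg_mul, Matrix.mul_assoc, hNP, Matrix.mul_zero, neg_zero]

end

section

variable {n : Type*} [Fintype n] [DecidableEq n]

lemma Matrix.PosSemidef.sqrt_eq_cfcSqrt {A : Matrix n n ℝ} (hA : A.PosSemidef) :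
    hA.sqrt = CFC.sqrt A := by
  rw [CFC.sqrt_eq_real_sqrt A (nonneg_iff_posSemidef.mpr hA), cfcₙ_eq_cfc, hA.1.cfc_eq,
    IsHermitian.cfc, Unitary.conjStarAlgAut_apply]
  rfl

lemma Matrix.PosSemidef.posSemidef_sqrt {A : Matrix n n ℝ} (hA : A.PosSemidef) :
    hA.sqrt.PosSemidef := by
  rw [hA.sqrt_eq_cfcSqrt, ← nonneg_iff_posSemidef]
  exact CFC.sqrt_nonneg A

lemma Matrix.PosSemidef.sqrt_mul_self {A : Matrix n n ℝ} (hA : A.PosSemidef) :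
    hA.sqrt * hA.sqrt = A := by
  rw [hA.sqrt_eq_cfcSqrt]
  exact CFC.sqrt_mul_sqrt_self A (nonneg_iff_posSemidef.mpr hA)

lemma Matrix.one_sub_add_posPart {A : Matrix n n ℝ} (hA : A.IsHermitian) :
    1 - A + A⁺ = 1 + A⁻ := by
  nth_rw 1 [← CFC.posPart_sub_negPart A hA]
  abel

lemma Matrix.posSemidef_one_sub_inv_one_add {N : Matrix n n ℝ} (hN : N.PosSemidef) :
    (1 - (1 + N)⁻¹).PosSemidef := by
  have hspec : ∀ x ∈ spectrum ℝ N, 0 ≤ x :=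
    fun x hx => spectrum_nonneg_of_nonneg (nonneg_iff_posSemidef.mpr hN) hx
  have hcont (f : ℝ → ℝ) : ContinuousOn f (spectrum ℝ N) := N.finite_spectrum.continuousOn f
  have hinv : cfc (fun x : ℝ => (1 + x)⁻¹) N = (1 + N)⁻¹ := by
    rw [cfc_inv (fun x : ℝ => 1 + x) N (fun x hx => by linarith [hspec x hx]) (hcont _),
      cfc_add (a := N) (fun _ => 1) (fun x => x) (hcont _) (hcont _), cfc_const_one ℝ N,
      cfc_id' ℝ N, nonsing_inv_eq_ringInverse]
  rw [← nonneg_iff_posSemidef, ← hinv, ← cfc_const_one ℝ N,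
    ← cfc_sub (a := N) (fun _ => 1) (fun x : ℝ => (1 + x)⁻¹) (hcont _) (hcont _)]
  exact cfc_nonneg fun x hx => sub_nonneg.mpr (inv_le_one_of_one_le₀ (by linarith [hspec x hx]))

end

theorem stmt12_general {p : ℕ} (kj : ℝ) (hkj : 0 < kj)
    (Γ B : Matrix (Fin p) (Fin p) ℝ) (hΓ : Γ.PosDef) (hBs : B.IsSymm)
    (sqrtΓ : Matrix (Fin p) (Fin p) ℝ) (hsqrtΓ : sqrtΓ = hΓ.posSemidef.sqrt)
    (Ystar : Matrix (Fin p) (Fin p) ℝ)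
    (hYstar : Ystar = kj • (sqrtΓ * matPosPart (1 - sqrtΓ⁻¹ * B * sqrtΓ⁻¹) * sqrtΓ))
    (G : Matrix (Fin p) (Fin p) ℝ)
    (hG : G = -Γ⁻¹ + (B + kj⁻¹ • Ystar)⁻¹) :
    Ystar.PosSemidef ∧ (B + kj⁻¹ • Ystar).PosDef ∧
      (-G).PosSemidef ∧ (G * Ystar).trace = 0 := by
  have hS : sqrtΓ.PosSemidef := hsqrtΓ ▸ hΓ.posSemidef.posSemidef_sqrt
  have hSS : sqrtΓ * sqrtΓ = Γ := hsqrtΓ ▸ hΓ.posSemidef.sqrt_mul_self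
  have hSu : IsUnit sqrtΓ := isUnit_of_mul_isUnit_left (hSS ▸ hΓ.isUnit)
  have hSdet : IsUnit sqrtΓ.det := (isUnit_iff_isUnit_det _).mp hSu
  set A := 1 - sqrtΓ⁻¹ * B * sqrtΓ⁻¹ with hA_def
  have hA : A.IsHermitian := isHermitian_one.sub
    (by simpa only [hS.1.inv.eq] using isHermitian_conjTranspose_mul_mul sqrtΓ⁻¹ hBs)
  have hN : A⁻.PosSemidef := nonneg_iff_posSemidef.mp (CFC.negPart_nonneg A)
  have hY : Ystar = kj • (sqrtΓ * A⁺ * sqrtΓ) := by rw [hYstar, matPosPart_eq_posPart hA]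
  have hB : B = sqrtΓ * (1 - A) * sqrtΓ := by
    rw [hA_def, sub_sub_cancel, conj_nonsing_inv_conj hSdet]
  have hC : B + kj⁻¹ • Ystar = sqrtΓ * (1 + A⁻) * sqrtΓ := by
    rw [hY, smul_smul, inv_mul_cancel₀ hkj.ne', one_smul, hB, ← add_mul, ← mul_add,
      one_sub_add_posPart hA]
  have hCpd : (1 + A⁻).PosDef := PosDef.one.add_posSemidef hN
  have hG' : G = sqrtΓ⁻¹ * ((1 + A⁻)⁻¹ - 1) * sqrtΓ⁻¹ := by
    rw [hG, hC, ← hSS, neg_add_eq_sub, inv_conj_sub_inv_mul_self]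
  refine ⟨?_, ?_, ?_, ?_⟩
  · rw [hY]
    exact ((nonneg_iff_posSemidef.mp (CFC.posPart_nonneg A)).mul_mul_self_of_isHermitian
      hS.1).smul hkj.le
  · rw [hC]
    exact hCpd.mul_mul_self_of_isHermitian hS.1 hSu
  · rw [hG', ← Matrix.neg_mul, ← Matrix.mul_neg, neg_sub]
    exact (posSemidef_one_sub_inv_one_add hN).mul_mul_self_of_isHermitian hS.1.inv
  · rw [hG', hY, mul_smul_comm, nonsing_inv_conj_mul_conj hSdet,
      inv_one_add_sub_one_mul_eq_zero ((isUnit_iff_isUnit_det _).mp hCpd.isUnit)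
        (CFC.negPart_mul_posPart A),
      Matrix.mul_zero, Matrix.zero_mul, smul_zero, trace_zero]

/-- With `Y* := kⱼ Γ^{1/2} (I − Γ^{−1/2} B Γ^{−1/2})₊ Γ^{1/2}`, we have
`Y* ⪰ O`, `B + Y*/kⱼ ≻ O`, the gradient `G := −Γ⁻¹ + (B + Y*/kⱼ)⁻¹` satisfies `G ⪯ O`,
and `trace(G Y*) = 0`. -/
theorem stmt12 {p : ℕ} (hp : 1 ≤ p) (kj : ℝ) (hkj : 0 < kj)
    (Γ B : Matrix (Fin p) (Fin p) ℝ) (hΓs : Γ.IsSymm) (hΓ : Γ.PosDef) (hBs : B.IsSymm)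
    (sqrtΓ : Matrix (Fin p) (Fin p) ℝ) (hsqrtΓ : sqrtΓ = hΓ.posSemidef.sqrt)
    (Ystar : Matrix (Fin p) (Fin p) ℝ)
    (hYstar : Ystar = kj • (sqrtΓ * matPosPart (1 - sqrtΓ⁻¹ * B * sqrtΓ⁻¹) * sqrtΓ))
    (G : Matrix (Fin p) (Fin p) ℝ)
    (hG : G = -Γ⁻¹ + (B + kj⁻¹ • Ystar)⁻¹) :
    Ystar.PosSemidef ∧ (B + kj⁻¹ • Ystar).PosDef ∧
      (-G).PosSemidef ∧ (G * Ystar).trace = 0 :=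
  stmt12_general kj hkj Γ B hΓ hBs sqrtΓ hsqrtΓ Ystar hYstar G hG
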